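/- arXiv:1710.06708 — 8 statements merged into one kernel-verified Lean document; each statement's English description precedes it below -/
import Mathlib

section
/- If V : Γ⁺ → B(H) is a partial-isometric representation of the positive cone Γ⁺ of a totally ordered abelian group Γ (i.e. each V_x is a partial isometry and V_{x+y} = V_x V_y), then for all x, t ∈ Γ⁺ the final projections V_x V_x* and V_t V_t* commute, and likewise the initial projections V_x* V_x and V_t* V_t commute. -/
/-! If `x ≤ t` then `V t = V x V (t - x) = V (t - x) V x`. For a partial isometry `a`, the final
projection `a a*` is a unit for any `v v*` with `v = a b` on both sides, so it commutes with
`v v*`; dually, `a* a` commutes with `v* v` whenever `v = b a`. -/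

section PartialIsometry

variable {R : Type*} [Monoid R] [StarMul R] {a : R}

theorem star_mul_self_mul_star_of_mul_star_mul_self (ha : a * star a * a = a) :
    star a * a * star a = star a := by
  simpa only [star_mul, star_star, mul_assoc] using congrArg star ha

theorem commute_mul_star_self_mul_star_mul_self_mul (ha : a * star a * a = a) (b : R) :
    Commute (a * star a) (a * b * star (a * b)) := by
  have left : a * star a * (a * b * star (a * b)) = a * b * star (a * b) := by
    simp only [← mul_assoc, ha]
  have right : a * b * star (a * b) * (a * star a) = a * b * star (a * b) := by
    simp only [star_mul, mul_assoc]
    rw [← mul_assoc (star a), star_mul_self_mul_star_of_mul_star_mul_self ha]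
  exact left.trans right.symm

theorem commute_star_mul_self_star_mul_mul_self (ha : a * star a * a = a) (b : R) :
    Commute (star a * a) (star (b * a) * (b * a)) := by
  simpa only [star_star, star_mul, mul_assoc] using
    commute_mul_star_self_mul_star_mul_self_mul (a := star a)
      (by simpa only [star_star] using star_mul_self_mul_star_of_mul_star_mul_self ha) (star b)

end PartialIsometry

/-- If `V : Γ⁺ → B(H)` is a partial-isometric representation of the positive cone of a
totally ordered abelian group `Γ` (each `V x` with `0 ≤ x` is a partial isometry and
`V (x+y) = V x * V y` for `x, y ≥ 0`), then the final projections `V x (V x)*` commute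
with each other, and likewise the initial projections `(V x)* (V x)` commute. -/
theorem partial_isometric_representation_projections_commute
    {Γ : Type*} [AddCommGroup Γ] [LinearOrder Γ] [IsOrderedAddMonoid Γ]
    {H : Type*} [NormedAddCommGroup H] [InnerProductSpace ℂ H] [CompleteSpace H]
    (V : Γ → H →L[ℂ] H)
    (hpiso : ∀ x : Γ, 0 ≤ x → V x * star (V x) * V x = V x)
    (hmul : ∀ x y : Γ, 0 ≤ x → 0 ≤ y → V (x + y) = V x * V y) :
    ∀ x t : Γ, 0 ≤ x → 0 ≤ t →
      Commute (V x * star (V x)) (V t * star (V t)) ∧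
      Commute (star (V x) * V x) (star (V t) * V t) := by
  have of_le : ∀ x t : Γ, 0 ≤ x → x ≤ t →
      Commute (V x * star (V x)) (V t * star (V t)) ∧
      Commute (star (V x) * V x) (star (V t) * V t) := by
    intro x t hx hxt
    have hs : 0 ≤ t - x := sub_nonneg.mpr hxt
    have hleft : V t = V x * V (t - x) := by rw [← hmul x _ hx hs, add_sub_cancel]
    have hright : V t = V (t - x) * V x := by rw [← hmul _ x hs hx, sub_add_cancel]
    exact ⟨hleft ▸ commute_mul_star_self_mul_star_mul_self_mul (hpiso x hx) _,
      hright ▸ commute_star_mul_self_star_mul_mul_self (hpiso x hx) _⟩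
  intro x t hx ht
  rcases le_total x t with hxt | htx
  · exact of_le x t hx hxt
  · exact (of_le t x ht htx).imp Commute.symm Commute.symm
end

section
/- Let ξ be an element of the closed linear span B = cl span{μ_x(a) : x ∈ Γ, a ∈ A} in ℓ∞(Γ, A). For every ε > 0 there exist y, z ∈ Γ such that ‖ξ(x)‖ < ε for all x < y, and ‖ξ(x) − α_{x−z}(ξ(z))‖ < ε for all x ≥ z. -/
open scoped ENNReal

variable {Γ : Type*} [AddCommGroup Γ] [LinearOrder Γ] [IsOrderedAddMonoid Γ] {A : Type*} [NonUnitalCStarAlgebra A]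

/-- The map `μ_x : A → ℓ∞(Γ, A)`, `(μ_x a)(y) = α_{y-x}(a)` for `y ≥ x` and `0` otherwise. -/
noncomputable def mu (α : Γ → (A →⋆ₙₐ[ℂ] A)) (x : Γ) (a : A) :
    lp (fun _ : Γ => A) ∞ :=
  ⟨fun y => if x ≤ y then α (y - x) a else 0,
    memℓp_infty ⟨‖a‖, by
      rintro r ⟨y, rfl⟩
      dsimp only
      split_ifs
      · exact NonUnitalStarAlgHom.norm_apply_le _ _
      · simp⟩⟩

/-- The C*-subalgebra `B = cl span {μ_x(a) : x ∈ Γ, a ∈ A}` of `ℓ∞(Γ, A)`, as a subset. -/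
noncomputable def BSet (α : Γ → (A →⋆ₙₐ[ℂ] A)) : Set (lp (fun _ : Γ => A) ∞) :=
  closure (Submodule.span ℂ {ξ : lp (fun _ : Γ => A) ∞ | ∃ x a, ξ = mu α x a} : Set _)


/-! Each `μ_x(a)` vanishes below `x`, and from `x` on it satisfies `ξ(w) = α_{w-z}(ξ(z))` with
`z = x`. Because `α` is a semigroup action, this covariance from `z` implies covariance from every
`z' ≥ z`, so both properties survive sums and hold exactly on the span of the `μ_x(a)`. An element
of the closure is uniformly `ε/2`-close to such an element, and since every `α_t` is contractive,
a uniform perturbation by `δ` costs at most `δ` below `y` and `2δ` in the covariance defect. -/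

theorem lp.norm_sub_apply_le {ι : Type*} {E : ι → Type*} [∀ i, NormedAddCommGroup (E i)]
    (ξ η : lp E ∞) (i : ι) : ‖ξ i - η i‖ ≤ ‖ξ - η‖ :=
  lp.norm_apply_le_norm ENNReal.top_ne_zero (ξ - η) i

theorem lp.norm_apply_lt_of_norm_sub_lt {ι : Type*} {E : ι → Type*}
    [∀ i, NormedAddCommGroup (E i)] {ξ η : lp E ∞} {δ : ℝ} (hξη : ‖ξ - η‖ < δ) {i : ι}
    (hηi : η i = 0) : ‖ξ i‖ < δ := by
  simpa [hηi] using (lp.norm_sub_apply_le ξ η i).trans_lt hξη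

section

variable {Γ : Type*} [AddCommGroup Γ] [LinearOrder Γ]
  {A : Type*} [NonUnitalCStarAlgebra A] (α : Γ → (A →⋆ₙₐ[ℂ] A))

def IsCovariantFrom (η : Γ → A) (z : Γ) : Prop :=
  ∀ x, z ≤ x → η x = α (x - z) (η z)

variable {α}

theorem norm_sub_covariant_lt_of_norm_sub_lt {ξ η : lp (fun _ : Γ => A) ∞} {δ : ℝ}
    (hξη : ‖ξ - η‖ < δ) {z : Γ} (hη : IsCovariantFrom α η z) {x : Γ} (hx : z ≤ x) :
    ‖ξ x - α (x - z) (ξ z)‖ < 2 * δ :=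
  calc ‖ξ x - α (x - z) (ξ z)‖ = ‖(ξ x - η x) + α (x - z) (η z - ξ z)‖ := by
        rw [map_sub, hη x hx]; abel_nf
    _ ≤ ‖ξ x - η x‖ + ‖η z - ξ z‖ :=
        (norm_add_le _ _).trans (add_le_add_right (NonUnitalStarAlgHom.norm_apply_le _ _) _)
    _ < δ + δ := by
        rw [norm_sub_rev (η z)]
        exact add_lt_add ((lp.norm_sub_apply_le ξ η x).trans_lt hξη)
          ((lp.norm_sub_apply_le ξ η z).trans_lt hξη)
    _ = 2 * δ := by ring

variable [IsOrderedAddMonoid Γ]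

theorem IsCovariantFrom.mono
    (hαadd : ∀ s t : Γ, 0 ≤ s → 0 ≤ t → ∀ a : A, α (s + t) a = α s (α t a))
    {η : Γ → A} {z z' : Γ} (hη : IsCovariantFrom α η z) (hzz' : z ≤ z') :
    IsCovariantFrom α η z' := by
  intro x hx
  rw [hη x (hzz'.trans hx), hη z' hzz', ← hαadd _ _ (sub_nonneg.mpr hx) (sub_nonneg.mpr hzz'),
    sub_add_sub_cancel]

variable (α) in
def vanishingCovariantSubmodule
    (hαadd : ∀ s t : Γ, 0 ≤ s → 0 ≤ t → ∀ a : A, α (s + t) a = α s (α t a)) :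
    Submodule ℂ (lp (fun _ : Γ => A) ∞) where
  carrier := {η | ∃ y z, (∀ x < y, η x = 0) ∧ IsCovariantFrom α η z}
  zero_mem' := ⟨0, 0, fun _ _ => rfl, fun x _ => by simp⟩
  add_mem' := by
    rintro η₁ η₂ ⟨y₁, z₁, hy₁, hz₁⟩ ⟨y₂, z₂, hy₂, hz₂⟩
    refine ⟨min y₁ y₂, max z₁ z₂, fun x hx => ?_, fun x hx => ?_⟩
    · simp [hy₁ x (hx.trans_le (min_le_left _ _)), hy₂ x (hx.trans_le (min_le_right _ _))]
    · simp [(hz₁.mono hαadd (le_max_left _ _)) x hx, (hz₂.mono hαadd (le_max_right _ _)) x hx]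
  smul_mem' := by
    rintro c η ⟨y, z, hy, hz⟩
    exact ⟨y, z, fun x hx => by simp [hy x hx], fun x hx => by simp [hz x hx]⟩

theorem mu_mem_vanishingCovariantSubmodule (hα0 : ∀ a : A, α 0 a = a)
    (hαadd : ∀ s t : Γ, 0 ≤ s → 0 ≤ t → ∀ a : A, α (s + t) a = α s (α t a)) (x : Γ) (a : A) :
    mu α x a ∈ vanishingCovariantSubmodule α hαadd := by
  refine ⟨x, x, fun w hw => if_neg hw.not_ge, fun w hw => ?_⟩
  change (if x ≤ w then α (w - x) a else 0) = α (w - x) (if x ≤ x then α (x - x) a else 0)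
  rw [if_pos hw, if_pos le_rfl, sub_self, hα0]

theorem span_mu_le_vanishingCovariantSubmodule (hα0 : ∀ a : A, α 0 a = a)
    (hαadd : ∀ s t : Γ, 0 ≤ s → 0 ≤ t → ∀ a : A, α (s + t) a = α s (α t a)) :
    Submodule.span ℂ {ξ : lp (fun _ : Γ => A) ∞ | ∃ x a, ξ = mu α x a} ≤
      vanishingCovariantSubmodule α hαadd :=
  Submodule.span_le.mpr fun _ ⟨x, a, hξ⟩ => hξ ▸ mu_mem_vanishingCovariantSubmodule hα0 hαadd x a

end

/-- Approximation property of elements of `B`: for `ξ ∈ B` and `ε > 0` there are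
`y, z ∈ Γ` with `‖ξ(x)‖ < ε` for all `x < y`, and `‖ξ(x) - α_{x-z}(ξ(z))‖ < ε` for all
`x ≥ z`. -/
theorem mem_B_approximation
    {Γ : Type*} [AddCommGroup Γ] [LinearOrder Γ] [IsOrderedAddMonoid Γ] {A : Type*} [NonUnitalCStarAlgebra A]
    (α : Γ → (A →⋆ₙₐ[ℂ] A))
    (hα0 : ∀ a : A, α 0 a = a)
    (hαadd : ∀ s t : Γ, 0 ≤ s → 0 ≤ t → ∀ a : A, α (s + t) a = α s (α t a))
    (ξ : lp (fun _ : Γ => A) ∞) (hξ : ξ ∈ BSet α) :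
    ∀ ε : ℝ, 0 < ε → ∃ y z : Γ,
      (∀ x : Γ, x < y → ‖ξ x‖ < ε) ∧
      (∀ x : Γ, z ≤ x → ‖ξ x - α (x - z) (ξ z)‖ < ε) := by
  intro ε hε
  obtain ⟨η, hη, hξη⟩ := Metric.mem_closure_iff.mp hξ (ε / 2) (half_pos hε)
  rw [dist_eq_norm] at hξη
  obtain ⟨y, z, hy, hz⟩ := span_mu_le_vanishingCovariantSubmodule hα0 hαadd hη
  refine ⟨y, z, fun x hx => ?_, fun x hx => ?_⟩
  · exact (lp.norm_apply_lt_of_norm_sub_lt hξη (hy x hx)).trans (half_lt_self hε)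
  · simpa [mul_div_cancel₀ ε two_ne_zero] using norm_sub_covariant_lt_of_norm_sub_lt hξη hz hx
end

section
/- For all a, b ∈ A and x < y in Γ, the identity (μ_x(a) − μ_y(α_{y−x}(a)))(μ_x(b) − μ_y(α_{y−x}(b))) = μ_x(ab) − μ_y(α_{y−x}(ab)) holds in ℓ∞(Γ, A). -/
open scoped ENNReal

variable {Γ : Type*} [AddCommGroup Γ] [LinearOrder Γ] [IsOrderedAddMonoid Γ] {A : Type*} [NonUnitalCStarAlgebra A]

/-- On `[y, ∞)` the two terms cancel by the semigroup law `α_{z-x} = α_{z-y} ∘ α_{y-x}`. -/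
theorem mu_sub_mu_apply (α : Γ → (A →⋆ₙₐ[ℂ] A))
    (hαadd : ∀ s t : Γ, 0 ≤ s → 0 ≤ t → ∀ a : A, α (s + t) a = α s (α t a))
    {x y : Γ} (hxy : x ≤ y) (c : A) (z : Γ) :
    (mu α x c - mu α y (α (y - x) c)) z = if x ≤ z ∧ ¬y ≤ z then α (z - x) c else 0 := by
  rw [lp.coeFn_sub, Pi.sub_apply]
  dsimp only [mu]
  by_cases hyz : y ≤ z
  · have hxz : x ≤ z := hxy.trans hyz
    rw [if_pos hxz, if_pos hyz, if_neg (fun h => h.2 hyz), ← hαadd _ _ (sub_nonneg.mpr hyz)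
      (sub_nonneg.mpr hxy), sub_add_sub_cancel, sub_self]
  · simp only [hyz, if_false, sub_zero, not_false_eq_true, and_true]

theorem mu_difference_product_identity_general
    {Γ : Type*} [AddCommGroup Γ] [LinearOrder Γ] [IsOrderedAddMonoid Γ] {A : Type*} [NonUnitalCStarAlgebra A]
    (α : Γ → (A →⋆ₙₐ[ℂ] A))
    (hαadd : ∀ s t : Γ, 0 ≤ s → 0 ≤ t → ∀ a : A, α (s + t) a = α s (α t a))
    (x y : Γ) (hxy : x < y) (a b : A) :
    (mu α x a - mu α y (α (y - x) a)) * (mu α x b - mu α y (α (y - x) b)) =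
      mu α x (a * b) - mu α y (α (y - x) (a * b)) := by
  ext z
  simp only [lp.infty_coeFn_mul, Pi.mul_apply, mu_sub_mu_apply α hαadd hxy.le]
  split_ifs
  · exact (map_mul _ a b).symm
  · exact zero_mul 0

/-- For `a, b ∈ A` and `x < y` in `Γ`:
`(μ_x(a) - μ_y(α_{y-x}(a))) (μ_x(b) - μ_y(α_{y-x}(b))) = μ_x(ab) - μ_y(α_{y-x}(ab))`. -/
theorem mu_difference_product_identity
    {Γ : Type*} [AddCommGroup Γ] [LinearOrder Γ] [IsOrderedAddMonoid Γ] {A : Type*} [NonUnitalCStarAlgebra A]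
    (α : Γ → (A →⋆ₙₐ[ℂ] A))
    (hα0 : ∀ a : A, α 0 a = a)
    (hαadd : ∀ s t : Γ, 0 ≤ s → 0 ≤ t → ∀ a : A, α (s + t) a = α s (α t a))
    (x y : Γ) (hxy : x < y) (a b : A) :
    (mu α x a - mu α y (α (y - x) a)) * (mu α x b - mu α y (α (y - x) b)) =
      mu α x (a * b) - mu α y (α (y - x) (a * b)) :=
  mu_difference_product_identity_general α hαadd x y hxy a b
end

section
/- The closed linear span I = cl span{μ_x(a) − μ_y(α_{y−x}(a)) : x < y ∈ Γ, a ∈ A} is a closed two-sided ideal of the C*-algebra B = cl span{μ_x(a) : x ∈ Γ, a ∈ A}. -/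
open scoped ENNReal

variable {Γ : Type*} [AddCommGroup Γ] [LinearOrder Γ] [IsOrderedAddMonoid Γ] {A : Type*} [NonUnitalCStarAlgebra A]

/-- The ideal `I = cl span {μ_x(a) - μ_y(α_{y-x}(a)) : x < y ∈ Γ, a ∈ A}`, as a subset. -/
noncomputable def ISet (α : Γ → (A →⋆ₙₐ[ℂ] A)) : Set (lp (fun _ : Γ => A) ∞) :=
  closure (Submodule.span ℂ
    {ξ : lp (fun _ : Γ => A) ∞ | ∃ x y a, x < y ∧ ξ = mu α x a - mu α y (α (y - x) a)} : Set _)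

/-!
Generators multiply by `μ_x(a) μ_y(b) = μ_{x ⊔ y}(α_{x ⊔ y - x}(a) α_{x ⊔ y - y}(b))`. Hence
multiplying a generator `μ_x(b) - μ_y(α_{y-x}(b))` of `I` on either side by `μ_z(a)` gives
`μ_p(c) - μ_q(α_{q-p}(c))` with `p = x ⊔ z ≤ q = y ⊔ z`, again a generator of `I` (or zero if
`p = q`). Bilinearity and continuity of multiplication carry this over to the closed spans.
-/

section SpanMul

variable {R E : Type*} [CommSemiring R] [NonUnitalNonAssocSemiring E] [Module R E]
  [SMulCommClass R E E] [IsScalarTower R E E]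

theorem Submodule.mul_mem_of_mem_span {s t : Set E} {p : Submodule R E}
    (h : ∀ a ∈ s, ∀ b ∈ t, a * b ∈ p) {x y : E} (hx : x ∈ span R s) (hy : y ∈ span R t) :
    x * y ∈ p :=
  map₂_le.1 ((map₂_span_span R (LinearMap.mul R E) s t).le.trans
    (span_le.2 (Set.image2_subset_iff.2 h))) x hx y hy

theorem Submodule.mul_mem_closure_of_mem_closure_span [TopologicalSpace E] [ContinuousMul E]
    {s t : Set E} {p : Submodule R E} (h : ∀ a ∈ s, ∀ b ∈ t, a * b ∈ p) {x y : E}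
    (hx : x ∈ closure (span R s : Set E)) (hy : y ∈ closure (span R t : Set E)) :
    x * y ∈ closure (p : Set E) :=
  map_mem_closure₂ continuous_mul hx hy fun _ hu _ hv => mul_mem_of_mem_span h hu hv

end SpanMul

section Semigroup

variable (α : Γ → (A →⋆ₙₐ[ℂ] A))

theorem alpha_sub_trans (hαadd : ∀ s t : Γ, 0 ≤ s → 0 ≤ t → ∀ a : A, α (s + t) a = α s (α t a))
    {x y z : Γ} (hxy : x ≤ y) (hyz : y ≤ z) (a : A) :
    α (z - y) (α (y - x) a) = α (z - x) a := by
  rw [← hαadd _ _ (sub_nonneg.2 hyz) (sub_nonneg.2 hxy), sub_add_sub_cancel]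

theorem mu_mul_mu (hαadd : ∀ s t : Γ, 0 ≤ s → 0 ≤ t → ∀ a : A, α (s + t) a = α s (α t a))
    (x y : Γ) (a b : A) :
    mu α x a * mu α y b = mu α (x ⊔ y) (α (x ⊔ y - x) a * α (x ⊔ y - y) b) := by
  ext z
  simp only [mu, lp.infty_coeFn_mul, Pi.mul_apply]
  by_cases hz : x ⊔ y ≤ z
  · rw [if_pos (le_sup_left.trans hz), if_pos (le_sup_right.trans hz), if_pos hz, map_mul,
      alpha_sub_trans α hαadd le_sup_left hz, alpha_sub_trans α hαadd le_sup_right hz]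
  · rw [if_neg hz]
    rcases not_and_or.1 (sup_le_iff.not.1 hz) with hx | hy
    · rw [if_neg hx, zero_mul]
    · rw [if_neg hy, mul_zero]

noncomputable def muDefect (x y : Γ) (a : A) : lp (fun _ : Γ => A) ∞ :=
  mu α x a - mu α y (α (y - x) a)

theorem mu_mul_muDefect (hαadd : ∀ s t : Γ, 0 ≤ s → 0 ≤ t → ∀ a : A, α (s + t) a = α s (α t a))
    {x y : Γ} (hxy : x ≤ y) (z : Γ) (a b : A) :
    mu α z a * muDefect α x y b =
      muDefect α (z ⊔ x) (z ⊔ y) (α (z ⊔ x - z) a * α (z ⊔ x - x) b) := by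
  have hle : z ⊔ x ≤ z ⊔ y := sup_le_sup_left hxy z
  rw [muDefect, muDefect, mul_sub, mu_mul_mu α hαadd, mu_mul_mu α hαadd, map_mul,
    alpha_sub_trans α hαadd le_sup_left hle, alpha_sub_trans α hαadd le_sup_right hle,
    alpha_sub_trans α hαadd hxy le_sup_right]

theorem muDefect_mul_mu (hαadd : ∀ s t : Γ, 0 ≤ s → 0 ≤ t → ∀ a : A, α (s + t) a = α s (α t a))
    {x y : Γ} (hxy : x ≤ y) (z : Γ) (a b : A) :
    muDefect α x y b * mu α z a =
      muDefect α (x ⊔ z) (y ⊔ z) (α (x ⊔ z - x) b * α (x ⊔ z - z) a) := by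
  have hle : x ⊔ z ≤ y ⊔ z := sup_le_sup_right hxy z
  rw [muDefect, muDefect, sub_mul, mu_mul_mu α hαadd, mu_mul_mu α hαadd, map_mul,
    alpha_sub_trans α hαadd le_sup_left hle, alpha_sub_trans α hαadd le_sup_right hle,
    alpha_sub_trans α hαadd hxy le_sup_left]

end Semigroup

theorem muDefect_mem_span {Γ : Type*} [AddCommGroup Γ] [LinearOrder Γ] {A : Type*}
    [NonUnitalCStarAlgebra A] (α : Γ → (A →⋆ₙₐ[ℂ] A)) (hα0 : ∀ a : A, α 0 a = a)
    {x y : Γ} (hxy : x ≤ y) (a : A) :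
    muDefect α x y a ∈ Submodule.span ℂ
      {ξ | ∃ x y a, x < y ∧ ξ = mu α x a - mu α y (α (y - x) a)} := by
  obtain rfl | hlt := hxy.eq_or_lt
  · rw [muDefect, sub_self, hα0, sub_self]
    exact zero_mem _
  · exact Submodule.subset_span ⟨x, y, a, hlt, rfl⟩

/-- `I` is a (closed, two-sided) ideal of `B`: it is contained in `B` and absorbs
multiplication by elements of `B` on both sides. -/
theorem ISet_is_ideal_of_BSet
    {Γ : Type*} [AddCommGroup Γ] [LinearOrder Γ] [IsOrderedAddMonoid Γ] {A : Type*} [NonUnitalCStarAlgebra A]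
    (α : Γ → (A →⋆ₙₐ[ℂ] A))
    (hα0 : ∀ a : A, α 0 a = a)
    (hαadd : ∀ s t : Γ, 0 ≤ s → 0 ≤ t → ∀ a : A, α (s + t) a = α s (α t a)) :
    ISet α ⊆ BSet α ∧
    (∀ ξ ∈ BSet α, ∀ η ∈ ISet α, ξ * η ∈ ISet α ∧ η * ξ ∈ ISet α) := by
  unfold ISet BSet
  refine ⟨closure_mono <| SetLike.coe_subset_coe.2 <| Submodule.span_le.2 ?_,
    fun ξ hξ η hη => ⟨?_, ?_⟩⟩
  · rintro _ ⟨x, y, a, -, rfl⟩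
    exact sub_mem (Submodule.subset_span ⟨x, a, rfl⟩) (Submodule.subset_span ⟨y, _, rfl⟩)
  · refine Submodule.mul_mem_closure_of_mem_closure_span ?_ hξ hη
    rintro _ ⟨z, a, rfl⟩ _ ⟨x, y, b, hxy, rfl⟩
    rw [← muDefect, mu_mul_muDefect α hαadd hxy.le]
    exact muDefect_mem_span α hα0 (sup_le_sup_left hxy.le z) _
  · refine Submodule.mul_mem_closure_of_mem_closure_span ?_ hη hξ
    rintro _ ⟨x, y, b, hxy, rfl⟩ _ ⟨z, a, rfl⟩
    rw [← muDefect, muDefect_mul_mu α hαadd hxy.le]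
    exact muDefect_mem_span α hα0 (sup_le_sup_right hxy.le z) _
end

section
/- Suppose each α_t (t ∈ Γ⁺) is injective, and let A_∞ be the direct limit of the direct system (A_s, φ_s^t) over Γ with A_s = A and connecting maps φ_s^t = α_{t−s} for s ≤ t, with canonical maps α^s : A → A_∞. Then for every n, elements y_0, …, y_n ∈ Γ and a_0, …, a_n ∈ A, the inequality ‖Σ_{i=0}^n α^{y_i}(a_i)‖ ≤ ‖Σ_{i=0}^n μ_{y_i}(a_i)‖ holds, and consequently there is a well-defined surjective *-homomorphism σ : B → A_∞ with σ(μ_y(a)) = α^y(a) for all y ∈ Γ, a ∈ A. -/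
open scoped ENNReal

variable {Γ : Type*} [AddCommGroup Γ] [LinearOrder Γ] [IsOrderedAddMonoid Γ] {A : Type*} [NonUnitalCStarAlgebra A]

/-
σ(ξ) is the limit at infinity of the net s ↦ ι_s(ξ(s)), where ι_s = α^s. On μ_x(a) this net is
eventually constant, equal to ι_x(a), by compatibility of the canonical maps. Since
*-homomorphisms of C*-algebras are contractive, the evaluations are uniformly equicontinuous in ξ,
so the limit exists on the closure B, is contractive, and inherits the algebraic operations
pointwise. The norm inequality is contractivity at a finite sum of μ's. For surjectivity,
‖μ_y(a)‖ ≤ ‖a‖ = ‖ι_y(a)‖ and the ranges of the ι_y are dense, so every element has an approximate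
preimage of comparable norm; the successive approximation argument of the open mapping theorem,
in the complete space B, makes it exact.
-/

open Filter Topology

theorem isClosed_setOf_exists_tendsto_atTop {S X E : Type*} [SemilatticeSup S] [Nonempty S]
    [PseudoMetricSpace X] [PseudoMetricSpace E] [CompleteSpace E] {F : S → X → E}
    (hF : UniformEquicontinuous F) :
    IsClosed {x | ∃ L, Tendsto (fun s => F s x) atTop (𝓝 L)} := by
  have hcauchy : {x | ∃ L, Tendsto (fun s => F s x) atTop (𝓝 L)} =
      {x | CauchySeq fun s => F s x} :=
    Set.ext fun x => ⟨fun ⟨_, hL⟩ => hL.cauchySeq, cauchySeq_tendsto_of_complete⟩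
  rw [hcauchy]
  refine isClosed_of_closure_subset fun x hx => Metric.cauchySeq_iff'.2 fun ε hε => ?_
  obtain ⟨δ, hδ, hF⟩ := Metric.uniformEquicontinuous_iff.1 hF (ε / 3) (by positivity)
  obtain ⟨y, hy, hxy⟩ := Metric.mem_closure_iff.1 hx δ hδ
  obtain ⟨N, hN⟩ := Metric.cauchySeq_iff'.1 (show CauchySeq fun s => F s y from hy) (ε / 3)
    (by positivity)
  refine ⟨N, fun n hn => ?_⟩
  calc dist (F n x) (F N x)
      ≤ dist (F n x) (F n y) + dist (F n y) (F N y) + dist (F N y) (F N x) :=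
        dist_triangle4 _ _ _ _
    _ < ε / 3 + ε / 3 + ε / 3 := by
        gcongr
        · exact hF x y hxy n
        · exact hN n hn
        · exact hF y x (by rwa [dist_comm]) N
    _ = ε := by ring

theorem AddMonoidHom.surjective_of_exists_approx_preimage {E F : Type*} [NormedAddCommGroup E]
    [CompleteSpace E] [NormedAddCommGroup F] (f : E →+ F) (hf : Continuous f) (C : ℝ)
    (h : ∀ y, ∃ x, ‖x‖ ≤ C * ‖y‖ ∧ ‖y - f x‖ ≤ ‖y‖ / 2) :
    Function.Surjective f := by
  choose g hg using h
  intro y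
  set r : ℕ → F := fun n => (fun z => z - f (g z))^[n] y
  have hr_succ : ∀ n, r (n + 1) = r n - f (g (r n)) := fun n =>
    Function.iterate_succ_apply' _ n y
  have hr : ∀ n, ‖r n‖ ≤ (1 / 2) ^ n * ‖y‖ := by
    intro n
    induction n with
    | zero => simp [r]
    | succ n ih =>
      rw [hr_succ, pow_succ]
      linarith [(hg (r n)).2]
  have hr_summable : Summable fun n => ‖r n‖ :=
    .of_nonneg_of_le (fun n => norm_nonneg _) hr
      ((summable_geometric_of_lt_one (by norm_num) (by norm_num)).mul_right _)
  have hsummable : Summable fun n => g (r n) :=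
    .of_norm_bounded (hr_summable.mul_left C) fun n => (hg (r n)).1
  have hpartial : ∀ n, f (∑ i ∈ Finset.range n, g (r i)) = y - r n := by
    intro n
    induction n with
    | zero => simp [r]
    | succ n ih => rw [Finset.sum_range_succ, map_add, ih, hr_succ]; abel
  have hlim : Tendsto (fun n => y - r n) atTop (𝓝 (f (∑' n, g (r n)))) := by
    simpa only [Function.comp_def, hpartial] using
      (hf.tendsto _).comp hsummable.hasSum.tendsto_sum_nat
  have hr_zero : Tendsto r atTop (𝓝 0) := by
    refine squeeze_zero_norm hr ?_
    simpa using (tendsto_pow_atTop_nhds_zero_of_lt_one (r := (1 / 2 : ℝ)) (by norm_num)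
      (by norm_num)).mul_const ‖y‖
  refine ⟨∑' n, g (r n), tendsto_nhds_unique hlim ?_⟩
  simpa using tendsto_const_nhds (x := y) |>.sub hr_zero

section TailLimit

variable {I Ainf : Type*} [NonUnitalCStarAlgebra Ainf]

noncomputable def tailEval (ι : I → (A →⋆ₙₐ[ℂ] Ainf)) :
    lp (fun _ : I => A) ∞ →ₗ[ℂ] I → Ainf where
  toFun ξ s := ι s (ξ s)
  map_add' ξ η := funext fun s => by simp
  map_smul' c ξ := funext fun s => by simp

variable (ι : I → (A →⋆ₙₐ[ℂ] Ainf))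

@[simp]
theorem tailEval_apply (ξ : lp (fun _ : I => A) ∞) (s : I) : tailEval ι ξ s = ι s (ξ s) := rfl

theorem tailEval_mul (ξ η : lp (fun _ : I => A) ∞) :
    tailEval ι (ξ * η) = tailEval ι ξ * tailEval ι η :=
  funext fun s => by simp

theorem tailEval_star (ξ : lp (fun _ : I => A) ∞) :
    tailEval ι (star ξ) = star (tailEval ι ξ) :=
  funext fun s => by simp [map_star]

theorem norm_tailEval_apply_le (ξ : lp (fun _ : I => A) ∞) (s : I) : ‖tailEval ι ξ s‖ ≤ ‖ξ‖ :=
  (NonUnitalStarAlgHom.norm_apply_le (ι s) _).trans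
    (lp.norm_apply_le_norm ENNReal.top_ne_zero ξ s)

theorem uniformEquicontinuous_tailEval :
    UniformEquicontinuous fun s (ξ : lp (fun _ : I => A) ∞) => tailEval ι ξ s :=
  Metric.uniformEquicontinuous_of_continuity_modulus id tendsto_id _ fun ξ η s => by
    rw [dist_eq_norm, dist_eq_norm, ← Pi.sub_apply, ← map_sub]
    exact norm_tailEval_apply_le ι (ξ - η) s

variable [SemilatticeSup I] [Nonempty I]

theorem norm_le_of_tendsto_tailEval {ξ : lp (fun _ : I => A) ∞} {L : Ainf}
    (h : Tendsto (tailEval ι ξ) atTop (𝓝 L)) : ‖L‖ ≤ ‖ξ‖ :=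
  le_of_tendsto' h.norm (norm_tailEval_apply_le ι ξ)

def tailConvergent : Submodule ℂ (lp (fun _ : I => A) ∞) where
  carrier := {ξ | ∃ L, Tendsto (tailEval ι ξ) atTop (𝓝 L)}
  add_mem' := fun ⟨L, hL⟩ ⟨M, hM⟩ => ⟨L + M, by rw [map_add]; exact hL.add hM⟩
  zero_mem' := ⟨0, by rw [map_zero]; exact tendsto_const_nhds⟩
  smul_mem' c _ := fun ⟨L, hL⟩ => ⟨c • L, by rw [map_smul]; exact hL.const_smul c⟩

theorem isClosed_tailConvergent : IsClosed (tailConvergent ι : Set (lp (fun _ : I => A) ∞)) :=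
  isClosed_setOf_exists_tendsto_atTop (uniformEquicontinuous_tailEval ι)

noncomputable def tailLimit : tailConvergent ι →L[ℂ] Ainf :=
  LinearMap.mkContinuous
    { toFun ξ := limUnder atTop (tailEval ι ξ)
      map_add' ξ η := by
        rw [Submodule.coe_add, map_add]
        exact ((tendsto_nhds_limUnder ξ.2).add (tendsto_nhds_limUnder η.2)).limUnder_eq
      map_smul' c ξ := by
        rw [Submodule.coe_smul, map_smul]
        exact ((tendsto_nhds_limUnder ξ.2).const_smul c).limUnder_eq }
    1 fun ξ => (one_mul ‖ξ‖).symm ▸ norm_le_of_tendsto_tailEval ι (tendsto_nhds_limUnder ξ.2)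

variable {ι}

theorem tendsto_tailLimit (ξ : tailConvergent ι) :
    Tendsto (tailEval ι ξ) atTop (𝓝 (tailLimit ι ξ)) :=
  tendsto_nhds_limUnder ξ.2

theorem tailLimit_eq_of_tendsto {ξ : tailConvergent ι} {L : Ainf}
    (h : Tendsto (tailEval ι ξ) atTop (𝓝 L)) : tailLimit ι ξ = L :=
  tendsto_nhds_unique (tendsto_tailLimit ξ) h

theorem tailLimit_mul {ξ η : tailConvergent ι}
    (h : (ξ * η : lp (fun _ : I => A) ∞) ∈ tailConvergent ι) :
    tailLimit ι ⟨ξ * η, h⟩ = tailLimit ι ξ * tailLimit ι η :=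
  tailLimit_eq_of_tendsto <| by
    rw [tailEval_mul]; exact (tendsto_tailLimit ξ).mul (tendsto_tailLimit η)

theorem tailLimit_star {ξ : tailConvergent ι}
    (h : star (ξ : lp (fun _ : I => A) ∞) ∈ tailConvergent ι) :
    tailLimit ι ⟨star ξ, h⟩ = star (tailLimit ι ξ) :=
  tailLimit_eq_of_tendsto <| by rw [tailEval_star]; exact (tendsto_tailLimit ξ).star

end TailLimit

section Mu

variable {Γ : Type*} [AddCommGroup Γ] [LinearOrder Γ] {Ainf : Type*} [NonUnitalCStarAlgebra Ainf]
  (α : Γ → (A →⋆ₙₐ[ℂ] A))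

theorem norm_mu_le (x : Γ) (a : A) : ‖mu α x a‖ ≤ ‖a‖ := by
  refine lp.norm_le_of_forall_le (norm_nonneg a) fun s => ?_
  change ‖if x ≤ s then α (s - x) a else 0‖ ≤ ‖a‖
  split_ifs
  · exact NonUnitalStarAlgHom.norm_apply_le _ _
  · simp

variable {α} {ι : Γ → (A →⋆ₙₐ[ℂ] Ainf)}
  (hcompat : ∀ s t : Γ, s ≤ t → ∀ a : A, ι t (α (t - s) a) = ι s a)
include hcompat

theorem tendsto_tailEval_mu (x : Γ) (a : A) :
    Tendsto (tailEval ι (mu α x a)) atTop (𝓝 (ι x a)) :=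
  tendsto_const_nhds.congr' <| (eventually_ge_atTop x).mono fun s hxs => by
    rw [tailEval_apply, ← hcompat x s hxs]
    exact congrArg (ι s) (if_pos hxs).symm

theorem BSet_subset_tailConvergent : BSet α ⊆ tailConvergent ι :=
  closure_minimal (Submodule.span_le.2 <| by
      rintro _ ⟨x, a, rfl⟩
      exact ⟨ι x a, tendsto_tailEval_mu hcompat x a⟩)
    (isClosed_tailConvergent ι)

theorem norm_sum_le_norm_sum_mu {J : Type*} (s : Finset J) (y : J → Γ) (a : J → A) :
    ‖∑ i ∈ s, ι (y i) (a i)‖ ≤ ‖∑ i ∈ s, mu α (y i) (a i)‖ :=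
  norm_le_of_tendsto_tailEval ι <| by
    rw [map_sum, Finset.sum_fn]
    exact tendsto_finsetSum s fun i _ => tendsto_tailEval_mu hcompat (y i) (a i)

theorem exists_mem_BSet_tailLimit_eq (hiso : ∀ (s : Γ) (a : A), ‖ι s a‖ = ‖a‖)
    (hdense : DenseRange fun p : Γ × A => ι p.1 p.2) (b : Ainf) :
    ∃ (ξ : lp (fun _ : Γ => A) ∞) (hξ : ξ ∈ BSet α),
      tailLimit ι ⟨ξ, BSet_subset_tailConvergent hcompat hξ⟩ = b := by
  let B := (Submodule.span ℂ {ξ : lp (fun _ : Γ => A) ∞ | ∃ x a, ξ = mu α x a}).topologicalClosure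
  let f : B →L[ℂ] Ainf := (tailLimit ι).comp
    (B.subtypeL.codRestrict _ fun ξ => BSet_subset_tailConvergent hcompat ξ.2)
  have happrox : ∀ b, ∃ ξ : B, ‖ξ‖ ≤ 2 * ‖b‖ ∧ ‖b - f ξ‖ ≤ ‖b‖ / 2 := by
    intro b
    rcases eq_or_ne b 0 with rfl | hb
    · exact ⟨0, by simp⟩
    obtain ⟨⟨x, a⟩, hxa⟩ := Metric.denseRange_iff.1 hdense b (‖b‖ / 2) (by positivity)
    rw [dist_eq_norm] at hxa
    dsimp only at hxa
    have hfmu : f ⟨mu α x a, subset_closure (Submodule.subset_span ⟨x, a, rfl⟩)⟩ = ι x a :=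
      tailLimit_eq_of_tendsto (tendsto_tailEval_mu hcompat x a)
    refine ⟨⟨mu α x a, subset_closure (Submodule.subset_span ⟨x, a, rfl⟩)⟩, ?_, ?_⟩
    · calc ‖mu α x a‖ ≤ ‖a‖ := norm_mu_le α x a
        _ = ‖ι x a‖ := (hiso x a).symm
        _ ≤ ‖b‖ + ‖b - ι x a‖ := norm_le_insert _ _
        _ ≤ 2 * ‖b‖ := by linarith [norm_nonneg b]
    · rw [hfmu]
      exact hxa.le
  obtain ⟨ξ, hξ⟩ := f.toLinearMap.toAddMonoidHom.surjective_of_exists_approx_preimage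
    f.continuous 2 happrox b
  exact ⟨ξ, ξ.2, hξ⟩

end Mu

theorem direct_limit_norm_ineq_and_sigma_exists_general
    {Γ : Type*} [AddCommGroup Γ] [LinearOrder Γ] {A : Type*} [NonUnitalCStarAlgebra A]
    (α : Γ → (A →⋆ₙₐ[ℂ] A))
    (Ainf : Type*) [NonUnitalCStarAlgebra Ainf]
    (ι : Γ → (A →⋆ₙₐ[ℂ] Ainf))
    (hcompat : ∀ s t : Γ, s ≤ t → ∀ a : A, ι t (α (t - s) a) = ι s a)
    (hiso : ∀ (s : Γ) (a : A), ‖ι s a‖ = ‖a‖)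
    (hdense : DenseRange fun p : Γ × A => ι p.1 p.2) :
    (∀ (n : ℕ) (y : Fin n → Γ) (a : Fin n → A),
      ‖∑ i, ι (y i) (a i)‖ ≤ ‖∑ i, mu α (y i) (a i)‖) ∧
    ∃ σ : {ξ : lp (fun _ : Γ => A) ∞ // ξ ∈ BSet α} → Ainf,
      Continuous σ ∧ Function.Surjective σ ∧
      (∀ ξ η (hξ : ξ ∈ BSet α) (hη : η ∈ BSet α) (hs : ξ + η ∈ BSet α),
        σ ⟨ξ + η, hs⟩ = σ ⟨ξ, hξ⟩ + σ ⟨η, hη⟩) ∧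
      (∀ (c : ℂ) ξ (hξ : ξ ∈ BSet α) (hs : c • ξ ∈ BSet α),
        σ ⟨c • ξ, hs⟩ = c • σ ⟨ξ, hξ⟩) ∧
      (∀ ξ η (hξ : ξ ∈ BSet α) (hη : η ∈ BSet α) (hm : ξ * η ∈ BSet α),
        σ ⟨ξ * η, hm⟩ = σ ⟨ξ, hξ⟩ * σ ⟨η, hη⟩) ∧
      (∀ ξ (hξ : ξ ∈ BSet α) (hs : star ξ ∈ BSet α),
        σ ⟨star ξ, hs⟩ = star (σ ⟨ξ, hξ⟩)) ∧
      (∀ (y : Γ) (a : A) (h : mu α y a ∈ BSet α), σ ⟨mu α y a, h⟩ = ι y a) := by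
  have hB := BSet_subset_tailConvergent hcompat
  refine ⟨fun n y a => norm_sum_le_norm_sum_mu hcompat Finset.univ y a,
    fun ξ => tailLimit ι ⟨ξ, hB ξ.2⟩, ?_, ?_, ?_, ?_, ?_, ?_, ?_⟩
  · exact (tailLimit ι).continuous.comp (continuous_subtype_val.subtype_mk _)
  · intro b
    obtain ⟨ξ, hξ, rfl⟩ := exists_mem_BSet_tailLimit_eq hcompat hiso hdense b
    exact ⟨⟨ξ, hξ⟩, rfl⟩
  · intro ξ η hξ hη _
    rw [← map_add]
    rfl
  · intro c ξ hξ _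
    rw [← map_smul]
    rfl
  · intro ξ η hξ hη hm
    exact tailLimit_mul (ξ := ⟨ξ, hB hξ⟩) (η := ⟨η, hB hη⟩) (hB hm)
  · intro ξ hξ hs
    exact tailLimit_star (ξ := ⟨ξ, hB hξ⟩) (hB hs)
  · intro y a _
    exact tailLimit_eq_of_tendsto (tendsto_tailEval_mu hcompat y a)

/-- If each `α_t` is injective and `A∞` is the direct limit of the system `(A, α_{t-s})`
over `Γ` (with isometric canonical maps `ι_s = α^s` having dense union of ranges and
satisfying the compatibility `ι_t ∘ α_{t-s} = ι_s`), then
`‖∑ ι_{y i}(a i)‖ ≤ ‖∑ μ_{y i}(a i)‖`, and there is a (well-defined) surjective continuous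
*-homomorphism `σ : B → A∞` with `σ(μ_y(a)) = ι_y(a)`. -/
theorem direct_limit_norm_ineq_and_sigma_exists
    {Γ : Type*} [AddCommGroup Γ] [LinearOrder Γ] [IsOrderedAddMonoid Γ] {A : Type*} [NonUnitalCStarAlgebra A]
    (α : Γ → (A →⋆ₙₐ[ℂ] A))
    (hα0 : ∀ a : A, α 0 a = a)
    (hαadd : ∀ s t : Γ, 0 ≤ s → 0 ≤ t → ∀ a : A, α (s + t) a = α s (α t a))
    (hinj : ∀ s : Γ, 0 ≤ s → Function.Injective (α s))
    (Ainf : Type*) [NonUnitalCStarAlgebra Ainf]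
    (ι : Γ → (A →⋆ₙₐ[ℂ] Ainf))
    (hcompat : ∀ s t : Γ, s ≤ t → ∀ a : A, ι t (α (t - s) a) = ι s a)
    (hiso : ∀ (s : Γ) (a : A), ‖ι s a‖ = ‖a‖)
    (hdense : DenseRange fun p : Γ × A => ι p.1 p.2) :
    (∀ (n : ℕ) (y : Fin n → Γ) (a : Fin n → A),
      ‖∑ i, ι (y i) (a i)‖ ≤ ‖∑ i, mu α (y i) (a i)‖) ∧
    ∃ σ : {ξ : lp (fun _ : Γ => A) ∞ // ξ ∈ BSet α} → Ainf,
      Continuous σ ∧ Function.Surjective σ ∧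
      (∀ ξ η (hξ : ξ ∈ BSet α) (hη : η ∈ BSet α) (hs : ξ + η ∈ BSet α),
        σ ⟨ξ + η, hs⟩ = σ ⟨ξ, hξ⟩ + σ ⟨η, hη⟩) ∧
      (∀ (c : ℂ) ξ (hξ : ξ ∈ BSet α) (hs : c • ξ ∈ BSet α),
        σ ⟨c • ξ, hs⟩ = c • σ ⟨ξ, hξ⟩) ∧
      (∀ ξ η (hξ : ξ ∈ BSet α) (hη : η ∈ BSet α) (hm : ξ * η ∈ BSet α),
        σ ⟨ξ * η, hm⟩ = σ ⟨ξ, hξ⟩ * σ ⟨η, hη⟩) ∧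
      (∀ ξ (hξ : ξ ∈ BSet α) (hs : star ξ ∈ BSet α),
        σ ⟨star ξ, hs⟩ = star (σ ⟨ξ, hξ⟩)) ∧
      (∀ (y : Γ) (a : A) (h : mu α y a ∈ BSet α), σ ⟨mu α y a, h⟩ = ι y a) :=
  direct_limit_norm_ineq_and_sigma_exists_general α Ainf ι hcompat hiso hdense
end

section
/- There is an action β of the group Γ by *-automorphisms of B, induced by the shift on ℓ∞(Γ, A) (i.e. (β_s ξ)(x) = ξ(x − s)), satisfying β_s ∘ μ_x = μ_{x+s} for all s, x ∈ Γ; moreover the ideal I is β-invariant. -/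
open scoped ENNReal

variable {Γ : Type*} [AddCommGroup Γ] [LinearOrder Γ] [IsOrderedAddMonoid Γ] {A : Type*} [NonUnitalCStarAlgebra A]

/-- The shift by `s` on `ℓ∞(Γ, E)`: `(β_s ξ)(x) = ξ(x - s)`. -/
noncomputable def shiftL {Γ : Type*} [AddCommGroup Γ] [LinearOrder Γ] [IsOrderedAddMonoid Γ] {E : Type*}
    [NormedAddCommGroup E] (s : Γ) (ξ : lp (fun _ : Γ => E) ∞) : lp (fun _ : Γ => E) ∞ :=
  ⟨fun x => ξ (x - s), memℓp_infty ⟨‖ξ‖, by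
    rintro r ⟨x, rfl⟩
    exact lp.norm_apply_le_norm ENNReal.top_ne_zero ξ (x - s)⟩⟩

/-!
The shift `β_s` is a linear isometry of `ℓ∞(Γ, A)` respecting products and adjoints, and it sends
`μ_x a` to `μ_{x+s} a`. Hence it maps the generators of `B` and of `I` into themselves, and by
linearity and continuity it maps their closed spans into themselves; applying this to `β_{-s}`
gives equality.
-/

open Set Submodule

section Shift

variable {E : Type*} [NormedAddCommGroup E]

@[simp]
lemma shiftL_apply (s : Γ) (ξ : lp (fun _ : Γ => E) ∞) (x : Γ) : shiftL s ξ x = ξ (x - s) :=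
  rfl

lemma shiftL_zero (ξ : lp (fun _ : Γ => E) ∞) : shiftL (0 : Γ) ξ = ξ :=
  lp.ext <| funext fun x => by simp

lemma shiftL_shiftL (s t : Γ) (ξ : lp (fun _ : Γ => E) ∞) :
    shiftL s (shiftL t ξ) = shiftL (s + t) ξ :=
  lp.ext <| funext fun x => by simp [sub_sub]

lemma shiftL_neg_shiftL (s : Γ) (ξ : lp (fun _ : Γ => E) ∞) : shiftL (-s) (shiftL s ξ) = ξ := by
  rw [shiftL_shiftL, neg_add_cancel, shiftL_zero]

lemma shiftL_shiftL_neg (s : Γ) (ξ : lp (fun _ : Γ => E) ∞) : shiftL s (shiftL (-s) ξ) = ξ := by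
  rw [shiftL_shiftL, add_neg_cancel, shiftL_zero]

lemma shiftL_add (s : Γ) (ξ η : lp (fun _ : Γ => E) ∞) :
    shiftL s (ξ + η) = shiftL s ξ + shiftL s η :=
  rfl

lemma shiftL_sub (s : Γ) (ξ η : lp (fun _ : Γ => E) ∞) :
    shiftL s (ξ - η) = shiftL s ξ - shiftL s η :=
  rfl

lemma shiftL_smul {𝕜 : Type*} [NormedRing 𝕜] [Module 𝕜 E] [IsBoundedSMul 𝕜 E]
    (s : Γ) (c : 𝕜) (ξ : lp (fun _ : Γ => E) ∞) : shiftL s (c • ξ) = c • shiftL s ξ :=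
  rfl

lemma shiftL_star [StarAddMonoid E] [NormedStarGroup E] (s : Γ) (ξ : lp (fun _ : Γ => E) ∞) :
    shiftL s (star ξ) = star (shiftL s ξ) :=
  rfl

lemma shiftL_mul {R : Type*} [NonUnitalNormedRing R] (s : Γ) (ξ η : lp (fun _ : Γ => R) ∞) :
    shiftL s (ξ * η) = shiftL s ξ * shiftL s η :=
  rfl

lemma norm_shiftL_le (s : Γ) (ξ : lp (fun _ : Γ => E) ∞) : ‖shiftL s ξ‖ ≤ ‖ξ‖ :=
  lp.norm_le_of_forall_le (norm_nonneg ξ) fun x =>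
    lp.norm_apply_le_norm ENNReal.top_ne_zero ξ (x - s)

lemma norm_shiftL (s : Γ) (ξ : lp (fun _ : Γ => E) ∞) : ‖shiftL s ξ‖ = ‖ξ‖ :=
  (norm_shiftL_le s ξ).antisymm <| by
    simpa only [shiftL_neg_shiftL] using norm_shiftL_le (-s) (shiftL s ξ)

variable (𝕜 : Type*) [NormedRing 𝕜] [Module 𝕜 E] [IsBoundedSMul 𝕜 E]

noncomputable def shiftₗᵢ (s : Γ) : lp (fun _ : Γ => E) ∞ ≃ₗᵢ[𝕜] lp (fun _ : Γ => E) ∞ where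
  toFun := shiftL s
  invFun := shiftL (-s)
  left_inv := shiftL_neg_shiftL s
  right_inv := shiftL_shiftL_neg s
  map_add' := shiftL_add s
  map_smul' := shiftL_smul s
  norm_map' := norm_shiftL s

variable {𝕜}

lemma mapsTo_shiftL_closure_span {S : Set (lp (fun _ : Γ => E) ∞)} {s : Γ}
    (hS : MapsTo (shiftL s) S S) :
    MapsTo (shiftL s) (closure (span 𝕜 S : Set (lp (fun _ : Γ => E) ∞)))
      (closure (span 𝕜 S : Set (lp (fun _ : Γ => E) ∞))) := by
  let e := shiftₗᵢ 𝕜 (E := E) s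
  have hspan : MapsTo (shiftL s) (span 𝕜 S : Set _) (span 𝕜 S) := fun ξ hξ =>
    (map_span_le e.toLinearEquiv.toLinearMap S _).2 (fun η hη => subset_span (hS hη)) ⟨ξ, hξ, rfl⟩
  exact hspan.closure e.continuous

lemma image_shiftL_eq_of_mapsTo {T : Set (lp (fun _ : Γ => E) ∞)}
    (hT : ∀ s : Γ, MapsTo (shiftL s) T T) (s : Γ) : shiftL s '' T = T :=
  (hT s).image_subset.antisymm fun ξ hξ => ⟨shiftL (-s) ξ, hT (-s) hξ, shiftL_shiftL_neg s ξ⟩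

end Shift

variable (α : Γ → (A →⋆ₙₐ[ℂ] A))

lemma shiftL_mu (s x : Γ) (a : A) : shiftL s (mu α x a) = mu α (x + s) a :=
  lp.ext <| funext fun y => by
    show (if x ≤ y - s then α (y - s - x) a else 0) = (if x + s ≤ y then α (y - (x + s)) a else 0)
    simp only [sub_sub, add_comm s x, le_sub_iff_add_le]

lemma mapsTo_shiftL_BSet (s : Γ) : MapsTo (shiftL s) (BSet α) (BSet α) :=
  mapsTo_shiftL_closure_span fun _ ⟨x, a, hξ⟩ => ⟨x + s, a, hξ ▸ shiftL_mu α s x a⟩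

lemma mapsTo_shiftL_ISet (s : Γ) : MapsTo (shiftL s) (ISet α) (ISet α) :=
  mapsTo_shiftL_closure_span fun _ ⟨x, y, a, hxy, hξ⟩ =>
    ⟨x + s, y + s, a, add_lt_add_left hxy s, by
      rw [hξ, shiftL_sub, shiftL_mu, shiftL_mu, add_sub_add_right_eq_sub]⟩

theorem shift_action_on_B_general
    {Γ : Type*} [AddCommGroup Γ] [LinearOrder Γ] [IsOrderedAddMonoid Γ] {A : Type*} [NonUnitalCStarAlgebra A]
    (α : Γ → (A →⋆ₙₐ[ℂ] A)) :
    (∀ (s : Γ) (ξ : lp (fun _ : Γ => A) ∞), shiftL (0 : Γ) ξ = ξ ∧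
      ∀ t : Γ, shiftL (s + t) ξ = shiftL s (shiftL t ξ)) ∧
    (∀ (s : Γ) (ξ η : lp (fun _ : Γ => A) ∞),
      shiftL s (ξ + η) = shiftL s ξ + shiftL s η ∧
      shiftL s (ξ * η) = shiftL s ξ * shiftL s η) ∧
    (∀ (s : Γ) (c : ℂ) (ξ : lp (fun _ : Γ => A) ∞), shiftL s (c • ξ) = c • shiftL s ξ) ∧
    (∀ (s : Γ) (ξ : lp (fun _ : Γ => A) ∞), shiftL s (star ξ) = star (shiftL s ξ)) ∧
    (∀ (s x : Γ) (a : A), shiftL s (mu α x a) = mu α (x + s) a) ∧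
    (∀ s : Γ, shiftL s '' BSet α = BSet α) ∧
    (∀ s : Γ, shiftL s '' ISet α = ISet α) :=
  ⟨fun s ξ => ⟨shiftL_zero ξ, fun t => (shiftL_shiftL s t ξ).symm⟩,
    fun s ξ η => ⟨shiftL_add s ξ η, shiftL_mul s ξ η⟩,
    shiftL_smul, shiftL_star, shiftL_mu α,
    image_shiftL_eq_of_mapsTo (mapsTo_shiftL_BSet α),
    image_shiftL_eq_of_mapsTo (mapsTo_shiftL_ISet α)⟩

/-- The shift on `ℓ∞(Γ, A)` induces an action `β` of `Γ` by *-automorphisms of `B`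
satisfying `β_s ∘ μ_x = μ_{x+s}`; moreover the ideal `I` is `β`-invariant. -/
theorem shift_action_on_B
    {Γ : Type*} [AddCommGroup Γ] [LinearOrder Γ] [IsOrderedAddMonoid Γ] {A : Type*} [NonUnitalCStarAlgebra A]
    (α : Γ → (A →⋆ₙₐ[ℂ] A))
    (hα0 : ∀ a : A, α 0 a = a)
    (hαadd : ∀ s t : Γ, 0 ≤ s → 0 ≤ t → ∀ a : A, α (s + t) a = α s (α t a)) :
    (∀ (s : Γ) (ξ : lp (fun _ : Γ => A) ∞), shiftL (0 : Γ) ξ = ξ ∧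
      ∀ t : Γ, shiftL (s + t) ξ = shiftL s (shiftL t ξ)) ∧
    (∀ (s : Γ) (ξ η : lp (fun _ : Γ => A) ∞),
      shiftL s (ξ + η) = shiftL s ξ + shiftL s η ∧
      shiftL s (ξ * η) = shiftL s ξ * shiftL s η) ∧
    (∀ (s : Γ) (c : ℂ) (ξ : lp (fun _ : Γ => A) ∞), shiftL s (c • ξ) = c • shiftL s ξ) ∧
    (∀ (s : Γ) (ξ : lp (fun _ : Γ => A) ∞), shiftL s (star ξ) = star (shiftL s ξ)) ∧
    (∀ (s x : Γ) (a : A), shiftL s (mu α x a) = mu α (x + s) a) ∧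
    (∀ s : Γ, shiftL s '' BSet α = BSet α) ∧
    (∀ s : Γ, shiftL s '' ISet α = ISet α) :=
  shift_action_on_B_general α
end

section
/- Suppose α : Γ → Aut(A) is an action of the group Γ by automorphisms of A. Define φ : B_Γ → M(ℓ∞(Γ, A)) by φ(f)(x) = f(x)·1_{M(A)} and ψ : A → M(ℓ∞(Γ, A)) by ψ(a)(x) = α_x(a) (viewing ℓ∞(Γ, M(A)) ⊆ M(ℓ∞(Γ, A))). Then φ and ψ are *-homomorphisms with commuting ranges, and the induced homomorphism δ = φ ⊗ ψ on B_Γ ⊗ A satisfies δ(1_x ⊗ a) = μ_x(α_x(a)) for all x ∈ Γ, a ∈ A. -/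
open scoped ENNReal

variable {Γ : Type*} [AddCommGroup Γ] [LinearOrder Γ] [IsOrderedAddMonoid Γ] {A : Type*} [NonUnitalCStarAlgebra A]

/-- The indicator function `1_s ∈ ℓ∞(Γ)` of `{t : t ≥ s}`. -/
noncomputable def oneInd {Γ : Type*} [AddCommGroup Γ] [LinearOrder Γ] [IsOrderedAddMonoid Γ] (s : Γ) :
    lp (fun _ : Γ => ℂ) ∞ :=
  ⟨fun t => if s ≤ t then (1 : ℂ) else 0, memℓp_infty ⟨1, by
    rintro r ⟨t, rfl⟩
    dsimp only
    split_ifs <;> simp⟩⟩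

/-- `B_Γ = cl span {1_s : s ∈ Γ} ⊆ ℓ∞(Γ)`. -/
noncomputable def BGamma (Γ : Type*) [AddCommGroup Γ] [LinearOrder Γ] [IsOrderedAddMonoid Γ] :
    Set (lp (fun _ : Γ => ℂ) ∞) :=
  closure (Submodule.span ℂ {f : lp (fun _ : Γ => ℂ) ∞ | ∃ s, f = oneInd s} : Set _)

/-- `B_{Γ,∞} = cl span {1_s - 1_t : s < t} ⊆ ℓ∞(Γ)`. -/
noncomputable def BGammaInfty (Γ : Type*) [AddCommGroup Γ] [LinearOrder Γ] [IsOrderedAddMonoid Γ] :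
    Set (lp (fun _ : Γ => ℂ) ∞) :=
  closure (Submodule.span ℂ
    {f : lp (fun _ : Γ => ℂ) ∞ | ∃ s t, s < t ∧ f = oneInd s - oneInd t} : Set _)

/-- `φ : B_Γ → ℓ∞(Γ, M(A))`, `φ(f)(x) = f(x)·1`, realized in `ℓ∞(Γ, A⁺)` where
`A⁺ = Unitization ℂ A`. -/
noncomputable def PhiMul {Γ : Type*} [AddCommGroup Γ] [LinearOrder Γ] [IsOrderedAddMonoid Γ] {A : Type*}
    [NonUnitalCStarAlgebra A] (f : lp (fun _ : Γ => ℂ) ∞) :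
    lp (fun _ : Γ => Unitization ℂ A) ∞ :=
  ⟨fun x => f x • (1 : Unitization ℂ A), memℓp_infty ⟨‖f‖ * ‖(1 : Unitization ℂ A)‖, by
    rintro r ⟨x, rfl⟩
    dsimp only
    rw [norm_smul]
    exact mul_le_mul_of_nonneg_right (lp.norm_apply_le_norm ENNReal.top_ne_zero f x)
      (norm_nonneg _)⟩⟩

/-- `ψ : A → ℓ∞(Γ, M(A))`, `ψ(a)(x) = α_x(a)`, realized in `ℓ∞(Γ, A⁺)`. -/
noncomputable def PsiMul {Γ : Type*} [AddCommGroup Γ] [LinearOrder Γ] [IsOrderedAddMonoid Γ] {A : Type*}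
    [NonUnitalCStarAlgebra A] (α : Γ → (A →⋆ₙₐ[ℂ] A)) (a : A) :
    lp (fun _ : Γ => Unitization ℂ A) ∞ :=
  ⟨fun x => (α x a : Unitization ℂ A), memℓp_infty ⟨‖a‖, by
    rintro r ⟨x, rfl⟩
    dsimp only
    rw [Unitization.norm_inr]
    exact NonUnitalStarAlgHom.norm_apply_le _ _⟩⟩

section PhiPsi

variable (α : Γ → (A →⋆ₙₐ[ℂ] A))

@[simp]
lemma oneInd_apply (s t : Γ) : oneInd s t = if s ≤ t then (1 : ℂ) else 0 := rfl

@[simp]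
lemma PhiMul_apply (f : lp (fun _ : Γ => ℂ) ∞) (x : Γ) :
    PhiMul (A := A) f x = f x • (1 : Unitization ℂ A) := rfl

@[simp]
lemma PsiMul_apply (a : A) (x : Γ) : PsiMul α a x = (α x a : Unitization ℂ A) := rfl

lemma PhiMul_add (f g : lp (fun _ : Γ => ℂ) ∞) :
    PhiMul (A := A) (f + g) = PhiMul f + PhiMul g :=
  lp.ext <| funext fun x => by simp [add_smul]

lemma PhiMul_mul (f g : lp (fun _ : Γ => ℂ) ∞) :
    PhiMul (A := A) (f * g) = PhiMul f * PhiMul g :=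
  lp.ext <| funext fun x => by
    simp only [PhiMul_apply, lp.infty_coeFn_mul, Pi.mul_apply, smul_mul_smul_comm, one_mul]

lemma PhiMul_star (f : lp (fun _ : Γ => ℂ) ∞) :
    PhiMul (A := A) (star f) = star (PhiMul f) :=
  lp.ext <| funext fun x => by simp [star_smul]

lemma PsiMul_add (a b : A) : PsiMul α (a + b) = PsiMul α a + PsiMul α b :=
  lp.ext <| funext fun x => by simp

lemma PsiMul_mul (a b : A) : PsiMul α (a * b) = PsiMul α a * PsiMul α b :=
  lp.ext <| funext fun x => by simp

lemma PsiMul_star (a : A) : PsiMul α (star a) = star (PsiMul α a) :=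
  lp.ext <| funext fun x => by simp [map_star, Unitization.inr_star]

lemma PhiMul_mul_PsiMul_comm (f : lp (fun _ : Γ => ℂ) ∞) (a : A) :
    PhiMul f * PsiMul α a = PsiMul α a * PhiMul f :=
  lp.ext <| funext fun x => by simp

lemma PhiMul_oneInd_mul_PsiMul_apply
    (hαadd : ∀ s t : Γ, ∀ a : A, α (s + t) a = α s (α t a)) (x : Γ) (a : A) (y : Γ) :
    (PhiMul (oneInd x) * PsiMul α a : lp (fun _ : Γ => Unitization ℂ A) ∞) y =
      (mu α x (α x a) y : Unitization ℂ A) := by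
  rw [lp.infty_coeFn_mul, Pi.mul_apply]
  by_cases h : x ≤ y
  · simp [h, mu, ← hαadd (y - x) x]
  · simp [h, mu]

end PhiPsi

theorem phi_psi_commuting_star_homs_and_delta_formula_general
    {Γ : Type*} [AddCommGroup Γ] [LinearOrder Γ] [IsOrderedAddMonoid Γ] {A : Type*} [NonUnitalCStarAlgebra A]
    (α : Γ → (A →⋆ₙₐ[ℂ] A))
    (hαadd : ∀ s t : Γ, ∀ a : A, α (s + t) a = α s (α t a)) :
    (∀ f g : lp (fun _ : Γ => ℂ) ∞,
      PhiMul (A := A) (f + g) = PhiMul f + PhiMul g ∧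
      PhiMul (A := A) (f * g) = PhiMul f * PhiMul g) ∧
    (∀ f : lp (fun _ : Γ => ℂ) ∞, PhiMul (A := A) (star f) = star (PhiMul f)) ∧
    (∀ a b : A, PsiMul α (a + b) = PsiMul α a + PsiMul α b ∧
      PsiMul α (a * b) = PsiMul α a * PsiMul α b) ∧
    (∀ a : A, PsiMul α (star a) = star (PsiMul α a)) ∧
    (∀ (f : lp (fun _ : Γ => ℂ) ∞) (a : A),
      PhiMul f * PsiMul α a = PsiMul α a * PhiMul f) ∧
    (∀ (x : Γ) (a : A) (y : Γ),
      ((PhiMul (oneInd x) * PsiMul α a : lp (fun _ : Γ => Unitization ℂ A) ∞) y) = ((mu α x (α x a)) y : Unitization ℂ A)) :=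
  ⟨fun f g => ⟨PhiMul_add f g, PhiMul_mul f g⟩, PhiMul_star,
    fun a b => ⟨PsiMul_add α a b, PsiMul_mul α a b⟩, PsiMul_star α, PhiMul_mul_PsiMul_comm α,
    PhiMul_oneInd_mul_PsiMul_apply α hαadd⟩

/-- For a group action `α : Γ → Aut(A)`, the maps `φ` and `ψ` are *-homomorphisms with
commuting ranges, and the induced map `δ = φ ⊗ ψ` satisfies `δ(1_x ⊗ a) = μ_x(α_x(a))`. -/
theorem phi_psi_commuting_star_homs_and_delta_formula
    {Γ : Type*} [AddCommGroup Γ] [LinearOrder Γ] [IsOrderedAddMonoid Γ] {A : Type*} [NonUnitalCStarAlgebra A]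
    (α : Γ → (A →⋆ₙₐ[ℂ] A))
    (hα0 : ∀ a : A, α 0 a = a)
    (hαadd : ∀ s t : Γ, ∀ a : A, α (s + t) a = α s (α t a))
    (hbij : ∀ s : Γ, Function.Bijective (α s)) :
    (∀ f g : lp (fun _ : Γ => ℂ) ∞,
      PhiMul (A := A) (f + g) = PhiMul f + PhiMul g ∧
      PhiMul (A := A) (f * g) = PhiMul f * PhiMul g) ∧
    (∀ f : lp (fun _ : Γ => ℂ) ∞, PhiMul (A := A) (star f) = star (PhiMul f)) ∧
    (∀ a b : A, PsiMul α (a + b) = PsiMul α a + PsiMul α b ∧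
      PsiMul α (a * b) = PsiMul α a * PsiMul α b) ∧
    (∀ a : A, PsiMul α (star a) = star (PsiMul α a)) ∧
    (∀ (f : lp (fun _ : Γ => ℂ) ∞) (a : A),
      PhiMul f * PsiMul α a = PsiMul α a * PhiMul f) ∧
    (∀ (x : Γ) (a : A) (y : Γ),
      ((PhiMul (oneInd x) * PsiMul α a : lp (fun _ : Γ => Unitization ℂ A) ∞) y) = ((mu α x (α x a)) y : Unitization ℂ A)) :=
  phi_psi_commuting_star_homs_and_delta_formula_general α hαadd
end

section
/- For Γ = ℤ and a single (extendible) endomorphism α of A generating the action of ℕ, the ideal I equals C₀(ℤ, A), the functions ξ : ℤ → A vanishing at ±∞ (equivalently, finitely supported functions are dense in I). -/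
open scoped ENNReal

/-- For a single endomorphism `α` of `A` and `n ∈ ℤ`, the map `μ_n : A → ℓ∞(ℤ, A)`,
`(μ_n a)(m) = α^{m-n}(a)` for `m ≥ n` and `0` otherwise. -/
noncomputable def muZ {A : Type*} [NonUnitalCStarAlgebra A] (α : A →⋆ₙₐ[ℂ] A) (n : ℤ) (a : A) :
    lp (fun _ : ℤ => A) ∞ :=
  ⟨fun m => if n ≤ m then (⇑α)^[(m - n).toNat] a else 0, memℓp_infty ⟨‖a‖, by
    rintro r ⟨m, rfl⟩
    dsimp only
    split_ifs
    · generalize (m - n).toNat = k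
      induction k with
      | zero => simp
      | succ k ih =>
        rw [Function.iterate_succ_apply']
        exact (NonUnitalStarAlgHom.norm_apply_le α _).trans ih
    · simp⟩⟩

/-- `B = cl span {μ_n(a) : n ∈ ℤ, a ∈ A} ⊆ ℓ∞(ℤ, A)`. -/
noncomputable def BZ {A : Type*} [NonUnitalCStarAlgebra A] (α : A →⋆ₙₐ[ℂ] A) :
    Set (lp (fun _ : ℤ => A) ∞) :=
  closure (Submodule.span ℂ {ξ : lp (fun _ : ℤ => A) ∞ | ∃ n a, ξ = muZ α n a} : Set _)
/-- `I = cl span {μ_m(a) - μ_n(α^{n-m}(a)) : m < n}`. -/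
noncomputable def IZ {A : Type*} [NonUnitalCStarAlgebra A] (α : A →⋆ₙₐ[ℂ] A) :
    Set (lp (fun _ : ℤ => A) ∞) :=
  closure (Submodule.span ℂ
    {ξ : lp (fun _ : ℤ => A) ∞ |
      ∃ m n a, m < n ∧ ξ = muZ α m a - muZ α n ((⇑α)^[(n - m).toNat] a)} : Set _)

/-- `C₀(ℤ, A)`: the closure in `ℓ∞(ℤ, A)` of the finitely supported functions. -/
noncomputable def C0Z (A : Type*) [NonUnitalCStarAlgebra A] : Set (lp (fun _ : ℤ => A) ∞) :=
  closure {ξ : lp (fun _ : ℤ => A) ∞ | (Function.support fun m : ℤ => ξ m).Finite}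

lemma muZ_apply {A : Type*} [NonUnitalCStarAlgebra A] (α : A →⋆ₙₐ[ℂ] A) (n : ℤ) (a : A)
    (k : ℤ) : (muZ α n a) k = if n ≤ k then (⇑α)^[(k - n).toNat] a else 0 := rfl

/-- Coordinates of the "single point mass" δ_n(a) = μ_n(a) - μ_{n+1}(α a). -/
lemma delta_apply {A : Type*} [NonUnitalCStarAlgebra A] (α : A →⋆ₙₐ[ℂ] A) (n : ℤ) (a : A)
    (k : ℤ) :
    (muZ α n a - muZ α (n + 1) (α a)) k = if k = n then a else 0 := by
  rw [lp.coeFn_sub, Pi.sub_apply, muZ_apply, muZ_apply]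
  rcases lt_trichotomy k n with h | h | h
  · rw [if_neg (by omega), if_neg (by omega), if_neg (by omega), sub_zero]
  · subst h
    rw [if_pos le_rfl, if_neg (by omega), if_pos rfl, sub_self, sub_zero]
    simp
  · rw [if_pos (by omega), if_pos (by omega), if_neg (by omega)]
    have : (k - n).toNat = (k - (n + 1)).toNat + 1 := by omega
    rw [this, Function.iterate_succ_apply, sub_self]

/-- The finitely supported elements form a submodule of `ℓ∞(ℤ, A)`. -/
noncomputable def finSupp (A : Type*) [NonUnitalCStarAlgebra A] :
    Submodule ℂ (lp (fun _ : ℤ => A) ∞) where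
  carrier := {ξ : lp (fun _ : ℤ => A) ∞ | (Function.support fun m : ℤ => ξ m).Finite}
  zero_mem' := by
    simp only [Set.mem_setOf_eq, lp.coeFn_zero]
    convert Set.finite_empty
    simp [Function.support]
  add_mem' := by
    intro ξ η hξ hη
    refine (hξ.union hη).subset ?_
    intro k hk
    simp only [Function.mem_support, lp.coeFn_add, Pi.add_apply] at hk ⊢
    by_contra h
    simp only [Set.mem_union, Function.mem_support, not_or, not_not] at h
    rw [h.1, h.2, add_zero] at hk
    exact hk rfl
  smul_mem' := by
    intro c ξ hξ
    refine hξ.subset ?_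
    intro k hk
    simp only [Function.mem_support, lp.coeFn_smul, Pi.smul_apply] at hk ⊢
    intro h
    rw [h, smul_zero] at hk
    exact hk rfl

/-- For `Γ = ℤ` and a single endomorphism `α`, the ideal `I` equals `C₀(ℤ, A)`. -/
theorem IZ_eq_C0Z {A : Type*} [NonUnitalCStarAlgebra A] (α : A →⋆ₙₐ[ℂ] A) :
    IZ α = C0Z A := by
  unfold IZ C0Z
  apply le_antisymm
  · -- generators are finitely supported
    apply closure_mono
    have : Submodule.span ℂ
        {ξ : lp (fun _ : ℤ => A) ∞ |
          ∃ m n a, m < n ∧ ξ = muZ α m a - muZ α n ((⇑α)^[(n - m).toNat] a)} ≤ finSupp A := by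
      rw [Submodule.span_le]
      rintro ξ ⟨m, n, a, hmn, rfl⟩
      refine (Set.finite_Ico m n).subset ?_
      intro k hk
      simp only [Function.mem_support] at hk
      rw [Set.mem_Ico]
      by_contra h
      apply hk
      rw [lp.coeFn_sub, Pi.sub_apply, muZ_apply, muZ_apply]
      push_neg at h
      rcases lt_or_ge k m with hkm | hkm
      · rw [if_neg (by omega), if_neg (by omega), sub_zero]
      · have hnk : n ≤ k := h hkm
        rw [if_pos hkm, if_pos hnk, ← Function.iterate_add_apply]
        have : (k - n).toNat + (n - m).toNat = (k - m).toNat := by omega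
        rw [this, sub_self]
    exact this
  · -- finitely supported elements lie in the span of the generators
    apply closure_mono
    intro ξ hξ
    have hfin : (Function.support fun m : ℤ => ξ m).Finite := hξ
    set s : Finset ℤ := hfin.toFinset with hs
    have key : ξ = ∑ n ∈ s, (muZ α n (ξ n) - muZ α (n + 1) (α (ξ n))) := by
      apply lp.ext
      funext k
      rw [lp.coeFn_sum, Finset.sum_apply]
      have : ∀ n ∈ s, (muZ α n (ξ n) - muZ α (n + 1) (α (ξ n))) k
          = if k = n then ξ k else 0 := by
        intro n _
        rw [delta_apply]
        split_ifs with h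
        · rw [h]
        · rfl
      rw [Finset.sum_congr rfl this, Finset.sum_ite_eq s k (fun _ => ξ k)]
      split_ifs with h
      · rfl
      · by_contra hne
        exact h (hfin.mem_toFinset.mpr (Function.mem_support.mpr hne))
    rw [key]
    apply Submodule.sum_mem
    intro n _
    apply Submodule.subset_span
    exact ⟨n, n + 1, ξ n, lt_add_one n, by norm_num⟩
end
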